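/- If two programs Π₁ and Π₂ have the same HT-models, then Π₁ and Π₂ are strongly equivalent: for every program Π, Π₁ ∪ Π and Π₂ ∪ Π have the same answer sets. -/
import Mathlib


inductive Form (α : Type) : Type
  | top : Form α
  | bot : Form α
  | atom : α → Form α
  | neg : Form α → Form α
  | and : Form α → Form α → Form α
  | or : Form α → Form α → Form α
  | imp : Form α → Form α → Form α

variable {α : Type}

/-- Truth at world `w` (`false` = "here" H, `true` = "there" T) in the
HT-interpretation `⟨IH, IT⟩` under here-and-there Kripke semantics. -/
def htSat (IH IT : Set α) : Bool → Form α → Prop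
  | _, .top => True
  | _, .bot => False
  | w, .atom a => a ∈ (if w then IT else IH)
  | w, .neg φ => ∀ u, w ≤ u → ¬ htSat IH IT u φ
  | w, .and φ ψ => htSat IH IT w φ ∧ htSat IH IT w ψ
  | w, .or φ ψ => htSat IH IT w φ ∨ htSat IH IT w ψ
  | w, .imp φ ψ => ∀ u, w ≤ u → (htSat IH IT u φ → htSat IH IT u ψ)

/-- Classical truth under interpretation `I`. -/
def clSat (I : Set α) : Form α → Prop
  | .top => True
  | .bot => False
  | .atom a => a ∈ I
  | .neg φ => ¬ clSat I φ
  | .and φ ψ => clSat I φ ∧ clSat I ψ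
  | .or φ ψ => clSat I φ ∨ clSat I ψ
  | .imp φ ψ => clSat I φ → clSat I ψ

open Classical in
/-- The reduct of a formula w.r.t. `I`: every maximal occurrence of `¬ψ`
is replaced by `⊥` if `ψ` is classically true under `I`, else by `⊤`. -/
noncomputable def reduct (I : Set α) : Form α → Form α
  | .neg φ => if clSat I φ then .bot else .top
  | .and φ ψ => .and (reduct I φ) (reduct I ψ)
  | .or φ ψ => .or (reduct I φ) (reduct I ψ)
  | .imp φ ψ => .imp (reduct I φ) (reduct I ψ)
  | .top => .top
  | .bot => .bot
  | .atom a => .atom a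

/-- A rule is a pair `(head, body)`; a program is a set of rules. -/
abbrev Program (α : Type) := Set (Form α × Form α)

/-- `I` is a classical model of the program (of the implications body → head). -/
def clModelProg (I : Set α) (P : Program α) : Prop :=
  ∀ r ∈ P, clSat I (.imp r.2 r.1)

/-- `⟨IH, IT⟩` is an HT-model of the program. -/
def htModelProg (IH IT : Set α) (P : Program α) : Prop :=
  ∀ r ∈ P, htSat IH IT false (.imp r.2 r.1)

/-- The reduct of a program. -/
noncomputable def progReduct (I : Set α) (P : Program α) : Program α :=
  (fun r => (reduct I r.1, reduct I r.2)) '' P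

/-- `I` is an answer set of `P`: a ⊆-minimal classical model of the reduct `P^I`. -/
def isAnswerSet (I : Set α) (P : Program α) : Prop :=
  clModelProg I (progReduct I P) ∧ ∀ J ⊂ I, ¬ clModelProg J (progReduct I P)

/-- Expressions: formulas built without `→`. -/
def IsExpr : Form α → Prop
  | .imp _ _ => False
  | .neg φ => IsExpr φ
  | .and φ ψ => IsExpr φ ∧ IsExpr ψ
  | .or φ ψ => IsExpr φ ∧ IsExpr ψ
  | _ => True

/-- All heads and bodies of `P` are expressions. -/
def ExprProg (P : Program α) : Prop := ∀ r ∈ P, IsExpr r.1 ∧ IsExpr r.2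

/-- Atoms occurring in a formula. -/
def atoms : Form α → Set α
  | .atom a => {a}
  | .neg φ => atoms φ
  | .and φ ψ => atoms φ ∪ atoms ψ
  | .or φ ψ => atoms φ ∪ atoms ψ
  | .imp φ ψ => atoms φ ∪ atoms ψ
  | _ => ∅


lemma forall_bool_ge (p : Bool → Prop) :
    (∀ u : Bool, false ≤ u → p u) ↔ p false ∧ p true := by
  constructor
  · intro h; exact ⟨h false (le_refl _), h true (Bool.false_le _)⟩
  · rintro ⟨h1, h2⟩ u _; cases u; exacts [h1, h2]

lemma ht_true (IH IT : Set α) (φ : Form α) : htSat IH IT true φ ↔ clSat IT φ := by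
  induction φ with
  | top => simp [htSat, clSat]
  | bot => simp [htSat, clSat]
  | atom a => simp [htSat, clSat]
  | neg φ ih =>
    simp only [htSat, clSat]
    constructor
    · intro h hc; exact h true (le_refl _) (ih.mpr hc)
    · intro h u hu
      cases u
      · exact absurd hu (by decide)
      · exact fun hs => h (ih.mp hs)
  | and φ ψ ih1 ih2 => simp [htSat, clSat, ih1, ih2]
  | or φ ψ ih1 ih2 => simp [htSat, clSat, ih1, ih2]
  | imp φ ψ ih1 ih2 =>
    simp only [htSat, clSat]
    constructor
    · intro h hφ; exact ih2.mp (h true (le_refl _) (ih1.mpr hφ))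
    · intro h u hu
      cases u
      · exact absurd hu (by decide)
      · exact fun hs => ih2.mpr (h (ih1.mp hs))

lemma ht_persist (IH IT : Set α) (hsub : IH ⊆ IT) (φ : Form α)
    (h : htSat IH IT false φ) : htSat IH IT true φ := by
  induction φ with
  | top => trivial
  | bot => exact h
  | atom a =>
    simp only [htSat] at h ⊢
    simpa using hsub (by simpa using h)
  | neg φ ih =>
    simp only [htSat] at h ⊢
    intro u hu; exact h u (Bool.false_le _)
  | and φ ψ ih1 ih2 =>
    simp only [htSat] at h ⊢
    exact ⟨ih1 h.1, ih2 h.2⟩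
  | or φ ψ ih1 ih2 =>
    simp only [htSat] at h ⊢
    cases h with
    | inl h => exact Or.inl (ih1 h)
    | inr h => exact Or.inr (ih2 h)
  | imp φ ψ ih1 ih2 =>
    simp only [htSat] at h ⊢
    intro u hu; exact h u (Bool.false_le _)

lemma ht_collapse (I : Set α) (φ : Form α) : htSat I I false φ ↔ clSat I φ := by
  induction φ with
  | top => simp [htSat, clSat]
  | bot => simp [htSat, clSat]
  | atom a => simp [htSat, clSat]
  | neg φ ih =>
    simp only [htSat, clSat]
    rw [forall_bool_ge (fun u => ¬ htSat I I u φ)]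
    rw [ih, ht_true]
    simp
  | and φ ψ ih1 ih2 => simp [htSat, clSat, ih1, ih2]
  | or φ ψ ih1 ih2 => simp [htSat, clSat, ih1, ih2]
  | imp φ ψ ih1 ih2 =>
    simp only [htSat, clSat]
    rw [forall_bool_ge (fun u => htSat I I u φ → htSat I I u ψ)]
    rw [ih1, ih2, ht_true, ht_true]
    simp

lemma ht_reduct (IH IT : Set α) (hsub : IH ⊆ IT) (φ : Form α) (he : IsExpr φ) :
    htSat IH IT false φ ↔ clSat IH (reduct IT φ) := by
  induction φ with
  | top => simp [htSat, reduct, clSat]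
  | bot => simp [htSat, reduct, clSat]
  | atom a => simp [htSat, reduct, clSat]
  | neg φ ih =>
    simp only [htSat, reduct]
    by_cases hc : clSat IT φ
    · rw [if_pos hc]
      simp only [clSat, iff_false]
      intro h
      exact h true (Bool.false_le _) ((ht_true IH IT φ).mpr hc)
    · rw [if_neg hc]
      simp only [clSat, iff_true]
      intro u hu
      cases u
      · intro hs
        exact hc ((ht_true IH IT φ).mp (ht_persist IH IT hsub φ hs))
      · intro hs
        exact hc ((ht_true IH IT φ).mp hs)
  | and φ ψ ih1 ih2 =>
    simp only [IsExpr] at he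
    simp [htSat, reduct, clSat, ih1 he.1, ih2 he.2]
  | or φ ψ ih1 ih2 =>
    simp only [IsExpr] at he
    simp [htSat, reduct, clSat, ih1 he.1, ih2 he.2]
  | imp φ ψ ih1 ih2 => exact he.elim

lemma clModel_reduct_iff (J I : Set α) (hsub : J ⊆ I) (P : Program α) (he : ExprProg P) :
    clModelProg J (progReduct I P) ↔
      ∀ r ∈ P, (htSat J I false r.2 → htSat J I false r.1) := by
  unfold clModelProg progReduct
  constructor
  · intro h r hr hb
    have hh := h _ ⟨r, hr, rfl⟩
    simp only [clSat] at hh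
    exact (ht_reduct J I hsub r.1 (he r hr).1).mpr
      (hh ((ht_reduct J I hsub r.2 (he r hr).2).mp hb))
  · rintro h r ⟨s, hs, rfl⟩
    simp only [clSat]
    intro hb
    exact (ht_reduct J I hsub s.1 (he s hs).1).mp
      (h s hs ((ht_reduct J I hsub s.2 (he s hs).2).mpr hb))

lemma htModel_iff (J I : Set α) (hsub : J ⊆ I) (P : Program α) :
    htModelProg J I P ↔
      ((∀ r ∈ P, htSat J I false r.2 → htSat J I false r.1) ∧ clModelProg I P) := by
  unfold htModelProg clModelProg
  constructor
  · intro h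
    refine ⟨fun r hr hb => ?_, fun r hr => ?_⟩
    · have hh := h r hr
      simp only [htSat] at hh
      exact hh false (le_refl _) hb
    · have hh := h r hr
      simp only [htSat] at hh
      simp only [clSat]
      intro hb
      exact (ht_true J I r.1).mp (hh true (Bool.false_le _) ((ht_true J I r.2).mpr hb))
  · rintro ⟨h1, h2⟩ r hr
    simp only [htSat]
    intro u hu
    cases u
    · exact h1 r hr
    · intro hb
      have hh := h2 r hr
      simp only [clSat] at hh
      exact (ht_true J I r.1).mpr (hh ((ht_true J I r.2).mp hb))

lemma answer_iff_equilibrium (I : Set α) (P : Program α) (he : ExprProg P) :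
    isAnswerSet I P ↔ (htModelProg I I P ∧ ∀ J ⊂ I, ¬ htModelProg J I P) := by
  unfold isAnswerSet
  have hI : clModelProg I (progReduct I P) ↔ clModelProg I P := by
    rw [clModel_reduct_iff I I subset_rfl P he]
    unfold clModelProg
    constructor
    · intro h r hr
      simp only [clSat]
      intro hb
      exact (ht_collapse I r.1).mp (h r hr ((ht_collapse I r.2).mpr hb))
    · intro h r hr hb
      have hh := h r hr
      simp only [clSat] at hh
      exact (ht_collapse I r.1).mpr (hh ((ht_collapse I r.2).mp hb))
  constructor
  · rintro ⟨h1, h2⟩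
    have hcl : clModelProg I P := hI.mp h1
    refine ⟨?_, fun J hJ hht => ?_⟩
    · rw [htModel_iff I I subset_rfl P]
      exact ⟨(clModel_reduct_iff I I subset_rfl P he).mp h1, hcl⟩
    · exact h2 J hJ ((clModel_reduct_iff J I hJ.subset P he).mpr
        (((htModel_iff J I hJ.subset P).mp hht).1))
  · rintro ⟨h1, h2⟩
    have hcl : clModelProg I P := ((htModel_iff I I subset_rfl P).mp h1).2
    refine ⟨hI.mpr hcl, fun J hJ hc => ?_⟩
    exact h2 J hJ ((htModel_iff J I hJ.subset P).mpr
      ⟨(clModel_reduct_iff J I hJ.subset P he).mp hc, hcl⟩)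

lemma htModel_union (IH IT : Set α) (P Q : Program α) :
    htModelProg IH IT (P ∪ Q) ↔ (htModelProg IH IT P ∧ htModelProg IH IT Q) := by
  unfold htModelProg
  constructor
  · intro h; exact ⟨fun r hr => h r (Or.inl hr), fun r hr => h r (Or.inr hr)⟩
  · rintro ⟨h1, h2⟩ r (hr | hr)
    exacts [h1 r hr, h2 r hr]

/-- Programs with the same HT-models are strongly equivalent. -/
theorem stmt14 {α : Type} (P₁ P₂ : Program α)
    (hfin₁ : P₁.Finite) (hfin₂ : P₂.Finite)
    (hexpr₁ : ExprProg P₁) (hexpr₂ : ExprProg P₂)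
    (hht : ∀ IH IT : Set α, IH ⊆ IT →
      (htModelProg IH IT P₁ ↔ htModelProg IH IT P₂)) :
    ∀ P : Program α, P.Finite → ExprProg P →
      ∀ I : Set α, (isAnswerSet I (P₁ ∪ P) ↔ isAnswerSet I (P₂ ∪ P)) := by
  intro P _ heP I
  have he1 : ExprProg (P₁ ∪ P) := fun r hr => hr.elim (hexpr₁ r) (heP r)
  have he2 : ExprProg (P₂ ∪ P) := fun r hr => hr.elim (hexpr₂ r) (heP r)
  have key : ∀ J : Set α, J ⊆ I →
      (htModelProg J I (P₁ ∪ P) ↔ htModelProg J I (P₂ ∪ P)) := by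
    intro J hJ
    rw [htModel_union, htModel_union, hht J I hJ]
  rw [answer_iff_equilibrium I _ he1, answer_iff_equilibrium I _ he2]
  constructor
  · rintro ⟨h1, h2⟩
    exact ⟨(key I subset_rfl).mp h1,
      fun J hJ hh => h2 J hJ ((key J hJ.subset).mpr hh)⟩
  · rintro ⟨h1, h2⟩
    exact ⟨(key I subset_rfl).mpr h1,
      fun J hJ hh => h2 J hJ ((key J hJ.subset).mp hh)⟩
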